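/- The relation of bisimilarity between labelled Markov processes given by the existence of a span of zig-zag morphisms is not transitive over general measurable spaces: there exist LMPs A, B, T and zig-zag morphisms A → T and B → T such that A and B are each bisimilar to T (via spans consisting of identity/legs), but there is no LMP C with zig-zag morphisms C → A and C → B. -/

import Mathlib

open MeasureTheory Set
open scoped ENNReal

noncomputable section

/-- A labelled Markov process over label set `L`: a measurable space with a
family of sub-Markov kernels indexed by `L`. -/
structure LMP (L : Type) where
  S : Type
  m : MeasurableSpace S
  τ : L → S → @Measure S m
  sub : ∀ a s, τ a s Set.univ ≤ 1
  meas : ∀ (a : L) (A : Set S), MeasurableSet[m] A →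
    @Measurable S ℝ≥0∞ m _ fun s => τ a s A

/-- A zig-zag morphism of labelled Markov processes. -/
def ZigZag {L : Type} (X Y : LMP L) (f : X.S → Y.S) : Prop :=
  Function.Surjective f ∧ @Measurable X.S Y.S X.m Y.m f ∧
  ∀ (a : L) (s : X.S) (Q : Set Y.S), MeasurableSet[Y.m] Q →
    X.τ a s (f ⁻¹' Q) = Y.τ a (f s) Q

namespace SpanAux

open scoped Classical

abbrev S01 : Type := ↥(Set.Ioo (0:ℝ) 1)

/-- Lebesgue measure on the subtype `(0,1)`. -/
def lamS : Measure S01 := (volume : Measure ℝ).comap Subtype.val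

lemma lamS_univ : lamS (univ : Set S01) = 1 := by
  rw [lamS, (MeasurableEmbedding.subtype_coe measurableSet_Ioo).comap_apply,
    image_univ, Subtype.range_coe, Real.volume_Ioo]
  norm_num

lemma lamS_ne_top (s : Set S01) : lamS s ≠ ∞ := by
  have h := measure_mono (μ := lamS) (subset_univ s)
  rw [lamS_univ] at h
  exact (h.trans_lt ENNReal.one_lt_top).ne

/-- An enumeration of the rationals as reals. -/
def rr (n : ℕ) : ℝ := ((Denumerable.eqv ℚ).symm n : ℚ)

lemma rr_surj (q : ℚ) : ∃ n, rr n = (q : ℝ) :=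
  ⟨Denumerable.eqv ℚ q, by simp [rr]⟩

lemma sep_of_rr {x y : S01} (h : ∀ n, ((x:ℝ) < rr n ↔ (y:ℝ) < rr n)) : x = y := by
  by_contra hxy
  have hne : (x:ℝ) ≠ (y:ℝ) := fun e => hxy (Subtype.ext e)
  rcases hne.lt_or_gt with hlt | hlt
  · obtain ⟨q, hq1, hq2⟩ := exists_rat_btwn hlt
    obtain ⟨n, hn⟩ := rr_surj q
    have := (h n).mp (by rw [hn]; exact hq1)
    rw [hn] at this; exact absurd this (not_lt.mpr hq2.le)
  · obtain ⟨q, hq1, hq2⟩ := exists_rat_btwn hlt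
    obtain ⟨n, hn⟩ := rr_surj q
    have := (h n).mpr (by rw [hn]; exact hq1)
    rw [hn] at this; exact absurd this (not_lt.mpr hq2.le)

variable (V : Set S01)

/-- The σ-algebra generated by the Borel sets together with `V`. -/
def mV : MeasurableSpace S01 :=
  (Subtype.instMeasurableSpace : MeasurableSpace S01) ⊔ MeasurableSpace.generateFrom {V}

lemma borel_le_mV : (Subtype.instMeasurableSpace : MeasurableSpace S01) ≤ mV V := le_sup_left

lemma V_mem_mV : MeasurableSet[mV V] V := by
  have h : MeasurableSpace.generateFrom {V} ≤ mV V := le_sup_right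
  exact h _ (MeasurableSpace.measurableSet_generateFrom rfl)

/-- measurable hull of `V` -/
def F : Set S01 := toMeasurable lamS V
/-- measurable hull of `Vᶜ` -/
def G : Set S01 := toMeasurable lamS Vᶜ

lemma V_subset_F : V ⊆ F V := subset_toMeasurable _ _
lemma Gc_subset_V : (G V)ᶜ ⊆ V := by
  rw [compl_subset_comm]; exact subset_toMeasurable _ _

lemma isCara_restrict_meas (W : Set S01) {s : Set S01} (hs : MeasurableSet s) :
    (OuterMeasure.restrict W lamS.toOuterMeasure).IsCaratheodory s := by
  intro t
  simp only [OuterMeasure.restrict_apply]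
  have h1 : (t ∩ s) ∩ W = (t ∩ W) ∩ s := by ext z; simp only [mem_inter_iff]; tauto
  have h2 : (t \ s) ∩ W = (t ∩ W) \ s := by
    ext z; simp only [mem_inter_iff, mem_diff]; tauto
  rw [h1, h2]
  exact (measure_inter_add_diff (μ := lamS) (t ∩ W) hs).symm

lemma isCara_restrict_V_subset {W : Set S01} (hWV : W ⊆ V) :
    (OuterMeasure.restrict W lamS.toOuterMeasure).IsCaratheodory V := by
  intro t
  simp only [OuterMeasure.restrict_apply]
  have h1 : (t ∩ V) ∩ W = t ∩ W := by
    ext z; simp only [mem_inter_iff, and_assoc]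
    exact ⟨fun ⟨a, _, c⟩ => ⟨a, c⟩, fun ⟨a, c⟩ => ⟨a, hWV c, c⟩⟩
  have h2 : (t \ V) ∩ W = ∅ := by
    ext z; simp only [mem_inter_iff, mem_diff, mem_empty_iff_false, iff_false]
    rintro ⟨⟨_, hnv⟩, hw⟩; exact hnv (hWV hw)
  rw [h1, h2]; simp

lemma isCara_restrict_V_disj {W : Set S01} (hWV : W ⊆ Vᶜ) :
    (OuterMeasure.restrict W lamS.toOuterMeasure).IsCaratheodory V := by
  intro t
  simp only [OuterMeasure.restrict_apply]
  have h1 : (t ∩ V) ∩ W = ∅ := by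
    ext z; simp only [mem_inter_iff, mem_empty_iff_false, iff_false]
    rintro ⟨⟨_, hv⟩, hw⟩; exact hWV hw hv
  have h2 : (t \ V) ∩ W = t ∩ W := by
    ext z; simp only [mem_inter_iff, mem_diff]
    exact ⟨fun ⟨⟨a, _⟩, c⟩ => ⟨a, c⟩, fun ⟨a, c⟩ => ⟨⟨a, fun hv => hWV c hv⟩, c⟩⟩
  rw [h1, h2]; simp

lemma isCara_add {m₁ m₂ : OuterMeasure S01} {s : Set S01}
    (h₁ : m₁.IsCaratheodory s) (h₂ : m₂.IsCaratheodory s) :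
    (m₁ + m₂).IsCaratheodory s := by
  intro t
  have e1 := h₁ t
  have e2 := h₂ t
  simp only [OuterMeasure.coe_add, Pi.add_apply]
  rw [e1, e2]; ring

/-- Outer measure inducing an extension of Lebesgue measure giving `V` its outer measure. -/
def om1 : OuterMeasure S01 :=
  OuterMeasure.restrict V lamS.toOuterMeasure +
    OuterMeasure.restrict (F V)ᶜ lamS.toOuterMeasure

/-- Outer measure inducing an extension of Lebesgue measure giving `V` its inner measure. -/
def om2 : OuterMeasure S01 :=
  OuterMeasure.restrict Vᶜ lamS.toOuterMeasure +
    OuterMeasure.restrict (G V)ᶜ lamS.toOuterMeasure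

lemma mV_le_cara1 : mV V ≤ (om1 V).caratheodory := by
  apply sup_le
  · intro s hs
    rw [OuterMeasure.isCaratheodory_iff]
    exact isCara_add (isCara_restrict_meas _ hs) (isCara_restrict_meas _ hs)
  · rw [MeasurableSpace.generateFrom_le_iff]
    intro s hs
    rw [mem_singleton_iff] at hs
    rw [hs]
    show MeasurableSet[(om1 V).caratheodory] V
    rw [OuterMeasure.isCaratheodory_iff]
    exact isCara_add (isCara_restrict_V_subset _ (le_refl V))
      (isCara_restrict_V_disj _ (by rw [compl_subset_compl]; exact V_subset_F V))

lemma mV_le_cara2 : mV V ≤ (om2 V).caratheodory := by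
  apply sup_le
  · intro s hs
    rw [OuterMeasure.isCaratheodory_iff]
    exact isCara_add (isCara_restrict_meas _ hs) (isCara_restrict_meas _ hs)
  · rw [MeasurableSpace.generateFrom_le_iff]
    intro s hs
    rw [mem_singleton_iff] at hs
    rw [hs]
    show MeasurableSet[(om2 V).caratheodory] V
    rw [OuterMeasure.isCaratheodory_iff]
    exact isCara_add (isCara_restrict_V_disj _ (le_refl Vᶜ))
      (isCara_restrict_V_subset _ (Gc_subset_V V))

/-- The measure `μ₁` on `σ(Borel ∪ {V})` extending Lebesgue with `μ₁ V = λ*(V)`. -/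
def mu1 : @Measure S01 (mV V) := @OuterMeasure.toMeasure S01 (mV V) (om1 V) (mV_le_cara1 V)

/-- The measure `μ₂` on `σ(Borel ∪ {V})` extending Lebesgue with `μ₂ V = λ₋(V)`. -/
def mu2 : @Measure S01 (mV V) := @OuterMeasure.toMeasure S01 (mV V) (om2 V) (mV_le_cara2 V)

lemma mu1_apply {Q : Set S01} (hQ : MeasurableSet[mV V] Q) :
    mu1 V Q = lamS (Q ∩ V) + lamS (Q ∩ (F V)ᶜ) := by
  rw [mu1, @toMeasure_apply S01 (mV V) (om1 V) (mV_le_cara1 V) Q hQ]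
  simp only [om1, OuterMeasure.coe_add, Pi.add_apply, OuterMeasure.restrict_apply]
  rfl

lemma mu2_apply {Q : Set S01} (hQ : MeasurableSet[mV V] Q) :
    mu2 V Q = lamS (Q ∩ Vᶜ) + lamS (Q ∩ (G V)ᶜ) := by
  rw [mu2, @toMeasure_apply S01 (mV V) (om2 V) (mV_le_cara2 V) Q hQ]
  simp only [om2, OuterMeasure.coe_add, Pi.add_apply, OuterMeasure.restrict_apply]
  rfl

lemma mu1_borel {Q : Set S01} (hQ : MeasurableSet Q) : mu1 V Q = lamS Q := by
  rw [mu1_apply V (borel_le_mV V _ hQ)]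
  have h1 : lamS (Q ∩ V) = lamS (Q ∩ F V) := by
    rw [inter_comm Q V, inter_comm Q (F V)]
    exact (Measure.measure_toMeasurable_inter hQ (lamS_ne_top V)).symm
  rw [h1]
  have h2 : Q ∩ (F V)ᶜ = Q \ F V := rfl
  rw [h2]
  exact measure_inter_add_diff Q (measurableSet_toMeasurable _ _)

lemma mu2_borel {Q : Set S01} (hQ : MeasurableSet Q) : mu2 V Q = lamS Q := by
  rw [mu2_apply V (borel_le_mV V _ hQ)]
  have h1 : lamS (Q ∩ Vᶜ) = lamS (Q ∩ G V) := by
    rw [inter_comm Q _, inter_comm Q (G V)]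
    exact (Measure.measure_toMeasurable_inter hQ (lamS_ne_top Vᶜ)).symm
  rw [h1]
  have h2 : Q ∩ (G V)ᶜ = Q \ G V := rfl
  rw [h2]
  exact measure_inter_add_diff Q (measurableSet_toMeasurable _ _)

lemma mu1_univ : mu1 V univ = 1 := by rw [mu1_borel V MeasurableSet.univ, lamS_univ]
lemma mu2_univ : mu2 V univ = 1 := by rw [mu2_borel V MeasurableSet.univ, lamS_univ]

lemma mu1_V : mu1 V V = lamS (F V) := by
  rw [mu1_apply V (V_mem_mV V)]
  have h1 : V ∩ V = V := inter_self V
  have h2 : V ∩ (F V)ᶜ = ∅ := by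
    ext z; simp only [mem_inter_iff, mem_compl_iff, mem_empty_iff_false, iff_false]
    rintro ⟨hv, hf⟩; exact hf (V_subset_F V hv)
  rw [h1, h2, measure_empty, add_zero]
  show lamS V = lamS (toMeasurable lamS V)
  exact (measure_toMeasurable V).symm

lemma mu2_V : mu2 V V = lamS (G V)ᶜ := by
  rw [mu2_apply V (V_mem_mV V)]
  have h1 : V ∩ Vᶜ = ∅ := inter_compl_self V
  have h2 : V ∩ (G V)ᶜ = (G V)ᶜ := inter_eq_self_of_subset_right (Gc_subset_V V)
  rw [h1, h2, measure_empty, zero_add]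

/-- generic LMP over `(0,1)` with a σ-algebra refining Borel, with kernels: for label
`inl n` jump (iff the current state is below the `n`th rational) with distribution `μ`,
for label `inr _` always jump with distribution `μ`. -/
def lmpOf (m' : MeasurableSpace S01) (hm' : (Subtype.instMeasurableSpace : MeasurableSpace S01) ≤ m')
    (μ : @Measure S01 m') (hμ : μ univ = 1) : LMP (ℕ ⊕ Unit) where
  S := S01
  m := m'
  τ := fun l s =>
    match l with
    | .inl n => if (s:ℝ) < rr n then μ else 0
    | .inr _ => μ
  sub := by
    rintro (n | u) s
    · dsimp only
      split_ifs
      · exact le_of_eq hμ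
      · simp
    · exact le_of_eq hμ
  meas := by
    rintro (n | u) A hA
    · show @Measurable S01 ℝ≥0∞ m' _ fun s => (if (s:ℝ) < rr n then μ else 0) A
      have he : (fun s : S01 => (if (s:ℝ) < rr n then μ else 0) A)
          = fun s : S01 => (if (s:ℝ) < rr n then μ A else 0) := by
        funext s; split_ifs <;> simp
      rw [he]
      have hset : MeasurableSet[Subtype.instMeasurableSpace] {s : S01 | (s:ℝ) < rr n} := by
        exact measurableSet_lt measurable_subtype_coe measurable_const
      exact Measurable.ite (hm' _ hset) measurable_const measurable_const
    · show @Measurable S01 ℝ≥0∞ m' _ fun _ => μ A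
      exact measurable_const

/-- The LMP `A`. -/
def Almp : LMP (ℕ ⊕ Unit) := lmpOf (mV V) (borel_le_mV V) (mu1 V) (mu1_univ V)
/-- The LMP `B`. -/
def Blmp : LMP (ℕ ⊕ Unit) := lmpOf (mV V) (borel_le_mV V) (mu2 V) (mu2_univ V)
/-- The LMP `T`. -/
def Tlmp : LMP (ℕ ⊕ Unit) := lmpOf Subtype.instMeasurableSpace le_rfl lamS lamS_univ

lemma Almp_inl (n : ℕ) (s : S01) :
    (Almp V).τ (Sum.inl n) s = if (s:ℝ) < rr n then mu1 V else 0 := rfl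
lemma Almp_inr (u : Unit) (s : S01) : (Almp V).τ (Sum.inr u) s = mu1 V := rfl
lemma Blmp_inl (n : ℕ) (s : S01) :
    (Blmp V).τ (Sum.inl n) s = if (s:ℝ) < rr n then mu2 V else 0 := rfl
lemma Blmp_inr (u : Unit) (s : S01) : (Blmp V).τ (Sum.inr u) s = mu2 V := rfl
lemma Tlmp_inl (n : ℕ) (s : S01) :
    (Tlmp).τ (Sum.inl n) s = if (s:ℝ) < rr n then lamS else 0 := rfl
lemma Tlmp_inr (u : Unit) (s : S01) : (Tlmp).τ (Sum.inr u) s = lamS := rfl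

end SpanAux

open SpanAux

/-- (assuming a non-Lebesgue-measurable subset of (0,1))
span-bisimilarity of LMPs is not transitive: there are LMPs A, B, T with
zig-zag morphisms A → T and B → T (so A and B are each span-bisimilar to T),
but there is no LMP C admitting zig-zag morphisms C → A and C → B. -/
theorem span_bisimilarity_not_transitive (V : Set ↥(Set.Ioo (0:ℝ) 1))
    (hV : ¬ NullMeasurableSet V ((volume : Measure ℝ).comap Subtype.val)) :
    ∃ (A B T : LMP (ℕ ⊕ Unit)) (f : A.S → T.S) (g : B.S → T.S),
      ZigZag A T f ∧ ZigZag B T g ∧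
      ¬ ∃ (C : LMP (ℕ ⊕ Unit)) (h : C.S → A.S) (k : C.S → B.S),
          ZigZag C A h ∧ ZigZag C B k := by
  have hVlam : ¬ NullMeasurableSet V lamS := hV
  refine ⟨Almp V, Blmp V, Tlmp, id, id, ?_, ?_, ?_⟩
  · refine ⟨Function.surjective_id, fun t ht => ?_, ?_⟩
    · exact borel_le_mV V t ht
    · rintro (n | u) s Q hQ
      · simp only [id_eq, Set.preimage_id]
        show (if (Subtype.val (p := fun x : ℝ => x ∈ Ioo 0 1) s) < rr n then mu1 V else 0) Q = (if (Subtype.val (p := fun x : ℝ => x ∈ Ioo 0 1) s) < rr n then lamS else 0) Q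
        split_ifs
        · exact mu1_borel V hQ
        · rfl
      · simp only [id_eq, Set.preimage_id]
        show mu1 V Q = lamS Q
        exact mu1_borel V hQ
  · refine ⟨Function.surjective_id, fun t ht => ?_, ?_⟩
    · exact borel_le_mV V t ht
    · rintro (n | u) s Q hQ
      · simp only [id_eq, Set.preimage_id]
        show (if (Subtype.val (p := fun x : ℝ => x ∈ Ioo 0 1) s) < rr n then mu2 V else 0) Q = (if (Subtype.val (p := fun x : ℝ => x ∈ Ioo 0 1) s) < rr n then lamS else 0) Q
        split_ifs
        · exact mu2_borel V hQ
        · rfl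
      · simp only [id_eq, Set.preimage_id]
        show mu2 V Q = lamS Q
        exact mu2_borel V hQ
  · rintro ⟨C, h, k, ⟨hsurj, hmeas, hker⟩, ⟨ksurj, kmeas, kker⟩⟩
    -- pointwise facts about the kernels of A and B
    have hA1 : ∀ (s : S01) (n : ℕ), (s:ℝ) < rr n → (Almp V).τ (Sum.inl n) s univ = 1 := by
      intro s n hs; rw [Almp_inl, if_pos hs]; exact mu1_univ V
    have hA0 : ∀ (s : S01) (n : ℕ), ¬ (s:ℝ) < rr n → (Almp V).τ (Sum.inl n) s univ = 0 := by
      intro s n hs; rw [Almp_inl, if_neg hs]; rfl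
    have hB1 : ∀ (s : S01) (n : ℕ), (s:ℝ) < rr n → (Blmp V).τ (Sum.inl n) s univ = 1 := by
      intro s n hs; rw [Blmp_inl, if_pos hs]; exact mu2_univ V
    have hB0 : ∀ (s : S01) (n : ℕ), ¬ (s:ℝ) < rr n → (Blmp V).τ (Sum.inl n) s univ = 0 := by
      intro s n hs; rw [Blmp_inl, if_neg hs]; rfl
    -- h and k coincide, since the labels `inl n` identify the state
    have hk : ∀ c, h c = k c := by
      intro c
      apply sep_of_rr
      intro n
      have e1 := hker (Sum.inl n) c univ MeasurableSet.univ
      have e2 := kker (Sum.inl n) c univ MeasurableSet.univ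
      rw [Set.preimage_univ] at e1 e2
      have eAB : ((Almp V).τ (Sum.inl n) (h c)) univ
          = ((Blmp V).τ (Sum.inl n) (k c)) univ := by rw [← e1, ← e2]
      constructor
      · intro hlt
        by_contra hnlt
        have : (1 : ℝ≥0∞) = 0 :=
          (hA1 (h c) n hlt).symm.trans (eAB.trans (hB0 (k c) n hnlt))
        exact one_ne_zero this
      · intro hlt
        by_contra hnlt
        have : (0 : ℝ≥0∞) = 1 :=
          (hA0 (h c) n hnlt).symm.trans (eAB.trans (hB1 (k c) n hlt))
        exact one_ne_zero this.symm
    -- C is nonempty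
    obtain ⟨c₀, -⟩ := hsurj ⟨(1:ℝ)/2, by norm_num⟩
    -- the label `inr` then forces `μ₁ V = μ₂ V`
    have e1 := hker (Sum.inr ()) c₀ V (V_mem_mV V)
    have e2 := kker (Sum.inr ()) c₀ V (V_mem_mV V)
    have ehk : h ⁻¹' V = k ⁻¹' V := by
      ext c; show h c ∈ V ↔ k c ∈ V; rw [hk c]; exact Iff.rfl
    have t1 : (C.τ (Sum.inr ()) c₀) (h ⁻¹' V) = mu1 V V := by
      have : ((Almp V).τ (Sum.inr ()) (h c₀)) V = mu1 V V := by exact rfl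
      exact e1.trans this
    have t2 : (C.τ (Sum.inr ()) c₀) (k ⁻¹' V) = mu2 V V := by
      have : ((Blmp V).τ (Sum.inr ()) (k c₀)) V = mu2 V V := by exact rfl
      exact e2.trans this
    have emu : mu1 V V = mu2 V V := by rw [← t1, ehk, t2]
    rw [mu1_V, mu2_V] at emu
    -- conclude that V would be null measurable : contradiction
    have hGF : (G V)ᶜ ⊆ F V := (Gc_subset_V V).trans (V_subset_F V)
    have hdiff : lamS (F V \ (G V)ᶜ) = 0 := by
      rw [measure_diff hGF ((measurableSet_toMeasurable _ _).compl.nullMeasurableSet)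
        (lamS_ne_top _), ← emu, tsub_self]
    have hVdiff : lamS (V \ (G V)ᶜ) = 0 :=
      measure_mono_null (diff_subset_diff_left (V_subset_F V)) hdiff
    have : NullMeasurableSet V lamS := by
      rw [← Set.union_diff_cancel (Gc_subset_V V)]
      exact ((measurableSet_toMeasurable _ _).compl.nullMeasurableSet).union
        (NullMeasurableSet.of_null hVdiff)
    exact hVlam this

end
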